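/- Let 0 < p ≤ 1, γ > 0, ε > 0, let S be a real symmetric d×d matrix, and let W, Ŵ be real d×m matrices. Denote by wⁱ and ŵⁱ the i-th rows of W and Ŵ respectively, and let G be the d×d diagonal matrix with diagonal entries g_ii = (p/2)·(wⁱᵀwⁱ + ε)^{(p−2)/2}. If −Tr(ŴᵀSŴ) + γ·Tr(ŴᵀGŴ) ≤ −Tr(WᵀSW) + γ·Tr(WᵀGW), then −Tr(ŴᵀSŴ) + γ·Σ_{i=1}^{d}(ŵⁱᵀŵⁱ + ε)^{p/2} ≤ −Tr(WᵀSW) + γ·Σ_{i=1}^{d}(wⁱᵀwⁱ + ε)^{p/2}. (This is the descent property of the alternating update: minimizing the surrogate trace objective with G fixed does not increase the regularized objective −Tr(WᵀSW) + γ·Σᵢ(wⁱᵀwⁱ + ε)^{p/2}.) -/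

import Mathlib

/-!
The function `t ↦ (t + ε) ^ (p / 2)` is concave on `[0, ∞)` for `0 < p ≤ 1`, and `G(W)` holds its
derivatives at the squared row norms of `W`. Hence `γ Tr(WᵀGW) = γ Σᵢ g_ii ‖wⁱ‖²` is, up to a
constant, the tangent-line majorant of the penalty at `W`: the penalty minus the surrogate term
is at most as large at `Ŵ` as at `W`. Adding this to the assumed decrease of the surrogate
objective gives the decrease of the regularized objective.
-/

open Matrix

theorem Real.rpow_le_rpow_add_mul_sub {x y q : ℝ} (hx : 0 < x) (hy : 0 ≤ y) (hq0 : 0 ≤ q)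
    (hq1 : q ≤ 1) : y ^ q ≤ x ^ q + q * x ^ (q - 1) * (y - x) := by
  have hs : -1 ≤ (y - x) / x := by rw [le_div_iff₀ hx]; linarith
  have hy_eq : y = x * (1 + (y - x) / x) := by field_simp; ring
  calc y ^ q = x ^ q * (1 + (y - x) / x) ^ q := by
        rw [← Real.mul_rpow hx.le (by linarith), ← hy_eq]
    _ ≤ x ^ q * (1 + q * ((y - x) / x)) :=
        mul_le_mul_of_nonneg_left (rpow_one_add_le_one_add_mul_self hs hq0 hq1)
          (Real.rpow_nonneg hx.le q)
    _ = x ^ q + q * (x ^ q / x) * (y - x) := by field_simp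
    _ = x ^ q + q * x ^ (q - 1) * (y - x) := by rw [Real.rpow_sub_one hx.ne']

theorem Matrix.trace_transpose_mul_diagonal_mul_self {m n R : Type*} [Fintype m] [Fintype n]
    [DecidableEq m] [CommSemiring R] (g : m → R) (V : Matrix m n R) :
    (Vᵀ * diagonal g * V).trace = ∑ i, g i * ∑ j, V i j ^ 2 := by
  rw [trace_mul_comm, ← Matrix.mul_assoc, trace]
  simp only [diag_apply, mul_diagonal]
  simp only [mul_apply, transpose_apply, Finset.sum_mul, Finset.mul_sum]
  exact Finset.sum_congr rfl fun i _ => Finset.sum_congr rfl fun j _ => by ring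

theorem sum_add_rpow_sub_tangent_le {ι : Type*} [Fintype ι] {q ε : ℝ} (hq0 : 0 ≤ q)
    (hq1 : q ≤ 1) (hε : 0 < ε) (s t : ι → ℝ) (hs : ∀ i, 0 ≤ s i) (ht : ∀ i, 0 ≤ t i) :
    ∑ i, (t i + ε) ^ q - ∑ i, q * (s i + ε) ^ (q - 1) * t i ≤
      ∑ i, (s i + ε) ^ q - ∑ i, q * (s i + ε) ^ (q - 1) * s i := by
  rw [← Finset.sum_sub_distrib, ← Finset.sum_sub_distrib]
  refine Finset.sum_le_sum fun i _ => ?_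
  have := Real.rpow_le_rpow_add_mul_sub (x := s i + ε) (y := t i + ε)
    (by linarith [hs i]) (by linarith [ht i]) hq0 hq1
  linarith

theorem stmt_3_general (d m : ℕ) (p γ ε : ℝ) (hp0 : 0 < p) (hp1 : p ≤ 1) (hγ : 0 < γ) (hε : 0 < ε)
    (S : Matrix (Fin d) (Fin d) ℝ)
    (W What : Matrix (Fin d) (Fin m) ℝ)
    (G : Matrix (Fin d) (Fin d) ℝ)
    (hG : G = Matrix.diagonal
      (fun i => p / 2 * ((∑ j, W i j ^ 2) + ε) ^ ((p - 2) / 2)))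
    (h : -(Whatᵀ * S * What).trace + γ * (Whatᵀ * G * What).trace ≤
          -(Wᵀ * S * W).trace + γ * (Wᵀ * G * W).trace) :
    -(Whatᵀ * S * What).trace + γ * ∑ i, ((∑ j, What i j ^ 2) + ε) ^ (p / 2) ≤
      -(Wᵀ * S * W).trace + γ * ∑ i, ((∑ j, W i j ^ 2) + ε) ^ (p / 2) := by
  have hexp : (p - 2) / 2 = p / 2 - 1 := by ring
  rw [hG, trace_transpose_mul_diagonal_mul_self, trace_transpose_mul_diagonal_mul_self,
    hexp] at h
  have hdescent := sum_add_rpow_sub_tangent_le (q := p / 2) (by linarith) (by linarith) hε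
    (fun i => ∑ j, W i j ^ 2) (fun i => ∑ j, What i j ^ 2)
    (fun i => Finset.sum_nonneg fun j _ => sq_nonneg (W i j))
    (fun i => Finset.sum_nonneg fun j _ => sq_nonneg (What i j))
  linarith [mul_le_mul_of_nonneg_left hdescent hγ.le]

/-- Descent property of the alternating update: if the updated Ŵ does not increase the
surrogate trace objective −Tr(WᵀSW) + γ·Tr(WᵀGW) with G = G(W) fixed, then it does not
increase the regularized objective −Tr(WᵀSW) + γ·Σᵢ(wⁱᵀwⁱ + ε)^{p/2}. -/
theorem stmt_3 (d m : ℕ) (p γ ε : ℝ) (hp0 : 0 < p) (hp1 : p ≤ 1) (hγ : 0 < γ) (hε : 0 < ε)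
    (S : Matrix (Fin d) (Fin d) ℝ) (hS : S.IsSymm)
    (W What : Matrix (Fin d) (Fin m) ℝ)
    (G : Matrix (Fin d) (Fin d) ℝ)
    (hG : G = Matrix.diagonal
      (fun i => p / 2 * ((∑ j, W i j ^ 2) + ε) ^ ((p - 2) / 2)))
    (h : -(Whatᵀ * S * What).trace + γ * (Whatᵀ * G * What).trace ≤
          -(Wᵀ * S * W).trace + γ * (Wᵀ * G * W).trace) :
    -(Whatᵀ * S * What).trace + γ * ∑ i, ((∑ j, What i j ^ 2) + ε) ^ (p / 2) ≤
      -(Wᵀ * S * W).trace + γ * ∑ i, ((∑ j, W i j ^ 2) + ε) ^ (p / 2) :=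
  stmt_3_general d m p γ ε hp0 hp1 hγ hε S W What G hG h
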